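/- arXiv:1702.08627 — 6 statements merged into one kernel-verified Lean document; each statement's English description precedes it below -/
import Mathlib

section
/- Let f : E → ℝ and H : E × F → ℝ be functions, let y ∈ F, x ∈ E, let η > 0 and C ≥ 0 be reals, and let e ∈ E. Suppose x⁺ is a global minimizer over E of u ↦ f(u) + H(u, y) + (η/2)‖u − x‖² − ⟨e, u⟩, and that ‖e‖ ≤ C‖x⁺ − x‖. Then the exact objective decreases sufficiently: f(x) + H(x, y) − f(x⁺) − H(x⁺, y) ≥ (η/4 − C²/η)·‖x⁺ − x‖². (One-block sufficient-decrease estimate underlying Lemma 1, Eq. (6).) -/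
/-!
Testing the minimality of `xp` against `u = x` and bounding the error term by Cauchy–Schwarz
gives a decrease of `(η/2 - C)‖xp - x‖²`; this dominates the claimed bound because
`η/2 - C - (η/4 - C²/η) = (η/2 - C)²/η ≥ 0`.
-/

open scoped RealInnerProductSpace

theorem le_sub_of_minimizes_perturbed_prox {E : Type*} [NormedAddCommGroup E] [InnerProductSpace ℝ E]
    {φ : E → ℝ} {x xp e : E} {η C : ℝ}
    (hmin : ∀ u : E,
      φ xp + (η / 2) * ‖xp - x‖ ^ 2 - ⟪e, xp⟫ ≤ φ u + (η / 2) * ‖u - x‖ ^ 2 - ⟪e, u⟫)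
    (herr : ‖e‖ ≤ C * ‖xp - x‖) :
    (η / 2 - C) * ‖xp - x‖ ^ 2 ≤ φ x - φ xp := by
  have hx := hmin x
  rw [sub_self, norm_zero, zero_pow two_ne_zero, mul_zero, add_zero] at hx
  have hinner : ⟪e, xp - x⟫ ≤ C * ‖xp - x‖ ^ 2 :=
    calc ⟪e, xp - x⟫ ≤ ‖e‖ * ‖xp - x‖ := real_inner_le_norm _ _
      _ ≤ C * ‖xp - x‖ * ‖xp - x‖ := mul_le_mul_of_nonneg_right herr (norm_nonneg _)
      _ = C * ‖xp - x‖ ^ 2 := by ring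
  rw [inner_sub_right] at hinner
  linarith

theorem quarter_sub_sq_div_le_half_sub {η : ℝ} (hη : 0 < η) (C : ℝ) :
    η / 4 - C ^ 2 / η ≤ η / 2 - C := by
  have hgap : η / 2 - C - (η / 4 - C ^ 2 / η) = (η / 2 - C) ^ 2 / η := by
    field_simp
    ring
  linarith [div_nonneg (sq_nonneg (η / 2 - C)) hη.le]

theorem stmt_5_general {E F : Type*} [NormedAddCommGroup E] [InnerProductSpace ℝ E]
    [NormedAddCommGroup F] [InnerProductSpace ℝ F]
    (f : E → ℝ) (H : E → F → ℝ) (y : F) (x : E)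
    (η C : ℝ) (hη : 0 < η) (e : E) (xp : E)
    (hmin : ∀ u : E,
      f xp + H xp y + (η / 2) * ‖xp - x‖ ^ 2 - ⟪e, xp⟫ ≤
        f u + H u y + (η / 2) * ‖u - x‖ ^ 2 - ⟪e, u⟫)
    (herr : ‖e‖ ≤ C * ‖xp - x‖) :
    f x + H x y - f xp - H xp y ≥ (η / 4 - C ^ 2 / η) * ‖xp - x‖ ^ 2 := by
  have hdecrease := le_sub_of_minimizes_perturbed_prox (φ := fun u => f u + H u y) hmin herr
  have hcoeff := mul_le_mul_of_nonneg_right (quarter_sub_sq_div_le_half_sub hη C)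
    (sq_nonneg ‖xp - x‖)
  linarith

/-- One-block sufficient-decrease estimate underlying Lemma 1, Eq. (6). -/
theorem stmt_5 {E F : Type*} [NormedAddCommGroup E] [InnerProductSpace ℝ E]
    [NormedAddCommGroup F] [InnerProductSpace ℝ F]
    (f : E → ℝ) (H : E → F → ℝ) (y : F) (x : E)
    (η C : ℝ) (hη : 0 < η) (hC : 0 ≤ C) (e : E) (xp : E)
    (hmin : ∀ u : E,
      f xp + H xp y + (η / 2) * ‖xp - x‖ ^ 2 - ⟪e, xp⟫ ≤
        f u + H u y + (η / 2) * ‖u - x‖ ^ 2 - ⟪e, u⟫)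
    (herr : ‖e‖ ≤ C * ‖xp - x‖) :
    f x + H x y - f xp - H xp y ≥ (η / 4 - C ^ 2 / η) * ‖xp - x‖ ^ 2 :=
  stmt_5_general f H y x η C hη e xp hmin herr
end

section
/- Let f : E → ℝ, g : F → ℝ, H : E × F → ℝ, and define Ψ(x, y) := f(x) + g(y) + H(x, y). Let Cx, Cy ≥ 0 and let (xᵗ) ⊂ E, (yᵗ) ⊂ F, (e_xᵗ) ⊂ E, (e_yᵗ) ⊂ F, and positive reals (η₁ᵗ), (η₂ᵗ) be such that for every t: (i) x^{t+1} is a global minimizer over E of u ↦ f(u) + H(u, yᵗ) + (η₁ᵗ/2)‖u − xᵗ‖² − ⟨e_x^{t+1}, u⟩ with ‖e_x^{t+1}‖ ≤ Cx‖x^{t+1} − xᵗ‖; (ii) y^{t+1} is a global minimizer over F of v ↦ g(v) + H(x^{t+1}, v) + (η₂ᵗ/2)‖v − yᵗ‖² − ⟨e_y^{t+1}, v⟩ with ‖e_y^{t+1}‖ ≤ Cy‖y^{t+1} − yᵗ‖. Then for every t: Ψ(xᵗ, yᵗ) − Ψ(x^{t+1}, y^{t+1}) ≥ (η₁ᵗ/4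 − Cx²/η₁ᵗ)·‖x^{t+1} − xᵗ‖² + (η₂ᵗ/4 − Cy²/η₂ᵗ)·‖y^{t+1} − yᵗ‖²; in particular, if η₁ᵗ > 2Cx and η₂ᵗ > 2Cy then both coefficients are strictly positive. (Lemma 1, first assertion (Eq. (6)): sufficient decrease of IPAD.) -/
/-!
Comparing the subproblem objective at its minimizer with its value at the previous iterate gives
a decrease of `η / 2 * ‖d‖ ^ 2 - ⟪e, d⟫` in the non-proximal part, where `d` is the step. The
error criterion and Cauchy–Schwarz bound `⟪e, d⟫` by `C * ‖d‖ ^ 2`, and `η / 2 - C` exceeds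
`η / 4 - C ^ 2 / η` by `(η - 2 C) ^ 2 / (4 η)`. Summing the `x`- and `y`-steps telescopes the
coupling term `H (x (t + 1)) (y t)`.
-/

open scoped RealInnerProductSpace

section InexactProximalStep

variable {E : Type*} [NormedAddCommGroup E] [InnerProductSpace ℝ E]

theorem real_inner_le_mul_norm_sq_of_norm_le {e d : E} {C : ℝ} (he : ‖e‖ ≤ C * ‖d‖) :
    ⟪e, d⟫ ≤ C * ‖d‖ ^ 2 :=
  calc ⟪e, d⟫ ≤ ‖e‖ * ‖d‖ := real_inner_le_norm e d
    _ ≤ C * ‖d‖ * ‖d‖ := mul_le_mul_of_nonneg_right he (norm_nonneg d)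
    _ = C * ‖d‖ ^ 2 := by ring

theorem inexactProxStep_decrease (φ : E → ℝ) {z₀ z e : E} {η C : ℝ}
    (hz : φ z + η / 2 * ‖z - z₀‖ ^ 2 - ⟪e, z⟫ ≤ φ z₀ - ⟪e, z₀⟫)
    (he : ‖e‖ ≤ C * ‖z - z₀‖) :
    (η / 2 - C) * ‖z - z₀‖ ^ 2 ≤ φ z₀ - φ z := by
  have hinner := real_inner_le_mul_norm_sq_of_norm_le he
  rw [inner_sub_right] at hinner
  linarith

end InexactProximalStep

theorem quarter_sub_sq_div_pos {η C : ℝ} (hC : 0 ≤ C) (hηC : 2 * C < η) :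
    0 < η / 4 - C ^ 2 / η := by
  have hη : 0 < η := by linarith
  have hfactor : η / 4 - C ^ 2 / η = (η - 2 * C) * (η + 2 * C) / (4 * η) := by
    field_simp
    ring
  rw [hfactor]
  exact div_pos (mul_pos (by linarith) (by linarith)) (by positivity)

/-- Lemma 1, first assertion (Eq. (6)): sufficient decrease of IPAD; in particular the
coefficients are strictly positive under the parameter condition of Assumption 1. -/
theorem stmt_6 {E F : Type*} [NormedAddCommGroup E] [InnerProductSpace ℝ E]
    [NormedAddCommGroup F] [InnerProductSpace ℝ F]
    (f : E → ℝ) (g : F → ℝ) (H : E → F → ℝ)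
    (Cx Cy : ℝ) (hCx : 0 ≤ Cx) (hCy : 0 ≤ Cy)
    (x : ℕ → E) (y : ℕ → F) (ex : ℕ → E) (ey : ℕ → F)
    (η₁ η₂ : ℕ → ℝ) (hη₁ : ∀ t, 0 < η₁ t) (hη₂ : ∀ t, 0 < η₂ t)
    (hx : ∀ t, ∀ u : E,
      f (x (t + 1)) + H (x (t + 1)) (y t) + (η₁ t / 2) * ‖x (t + 1) - x t‖ ^ 2
          - ⟪ex (t + 1), x (t + 1)⟫ ≤
        f u + H u (y t) + (η₁ t / 2) * ‖u - x t‖ ^ 2 - ⟪ex (t + 1), u⟫)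
    (hex : ∀ t, ‖ex (t + 1)‖ ≤ Cx * ‖x (t + 1) - x t‖)
    (hy : ∀ t, ∀ v : F,
      g (y (t + 1)) + H (x (t + 1)) (y (t + 1)) + (η₂ t / 2) * ‖y (t + 1) - y t‖ ^ 2
          - ⟪ey (t + 1), y (t + 1)⟫ ≤
        g v + H (x (t + 1)) v + (η₂ t / 2) * ‖v - y t‖ ^ 2 - ⟪ey (t + 1), v⟫)
    (hey : ∀ t, ‖ey (t + 1)‖ ≤ Cy * ‖y (t + 1) - y t‖) :
    ∀ t : ℕ,
      ((f (x t) + g (y t) + H (x t) (y t))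
          - (f (x (t + 1)) + g (y (t + 1)) + H (x (t + 1)) (y (t + 1))) ≥
        (η₁ t / 4 - Cx ^ 2 / η₁ t) * ‖x (t + 1) - x t‖ ^ 2
          + (η₂ t / 4 - Cy ^ 2 / η₂ t) * ‖y (t + 1) - y t‖ ^ 2)
      ∧ (η₁ t > 2 * Cx → 0 < η₁ t / 4 - Cx ^ 2 / η₁ t)
      ∧ (η₂ t > 2 * Cy → 0 < η₂ t / 4 - Cy ^ 2 / η₂ t) := by
  intro t
  have decrease_x := inexactProxStep_decrease (fun u => f u + H u (y t))
    (by simpa only [sub_self, norm_zero, zero_pow two_ne_zero, mul_zero, add_zero]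
      using hx t (x t)) (hex t)
  have decrease_y := inexactProxStep_decrease (fun v => g v + H (x (t + 1)) v)
    (by simpa only [sub_self, norm_zero, zero_pow two_ne_zero, mul_zero, add_zero]
      using hy t (y t)) (hey t)
  have coeff_x := mul_le_mul_of_nonneg_right (quarter_sub_sq_div_le_half_sub (hη₁ t) Cx)
    (sq_nonneg ‖x (t + 1) - x t‖)
  have coeff_y := mul_le_mul_of_nonneg_right (quarter_sub_sq_div_le_half_sub (hη₂ t) Cy)
    (sq_nonneg ‖y (t + 1) - y t‖)
  exact ⟨by linarith, quarter_sub_sq_div_pos hCx, quarter_sub_sq_div_pos hCy⟩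
end

section
/- Let E be a real inner product space and Ψ : E → ℝ continuously differentiable and bounded below. Let a, b > 0 and let (zᵗ)_{t∈ℕ} ⊂ E satisfy, for all t, (H1) Ψ(zᵗ) − Ψ(z^{t+1}) ≥ a‖z^{t+1} − zᵗ‖² and (H2) ‖∇Ψ(z^{t+1})‖ ≤ b‖z^{t+1} − zᵗ‖. Then every cluster point z* of (zᵗ) is a critical point of Ψ, i.e. ∇Ψ(z*) = 0, and moreover Ψ(zᵗ) converges to Ψ(z*). (Subsequence-convergence step in the proof of Theorem 1, in the smooth setting where the subdifferential reduces to the gradient.) -/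
/-!
Sufficient decrease makes `Ψ (z t)` antitone; along the subsequence it tends to `Ψ z*` by
continuity, so the whole sequence does. Hence the decrease `Ψ (z t) - Ψ (z (t + 1))` tends to `0`,
and with it the steps `‖z (t + 1) - z t‖`, and by the relative-error bound the gradients
along the iterates. Continuity of `∇Ψ` at `z*` then forces `∇Ψ z* = 0`.
-/

open Filter Topology

theorem ContDiff.continuous_gradient {𝕜 F : Type*} [RCLike 𝕜] [NormedAddCommGroup F]
    [InnerProductSpace 𝕜 F] [CompleteSpace F] {f : F → 𝕜} {n : WithTop ℕ∞}
    (hf : ContDiff 𝕜 n f) (hn : n ≠ 0) : Continuous (gradient f) :=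
  (InnerProductSpace.toDual 𝕜 F).symm.continuous.comp (hf.continuous_fderiv hn)

theorem tendsto_norm_sub_succ_of_sufficient_decrease {E : Type*} [SeminormedAddCommGroup E]
    {f : ℕ → ℝ} {x : ℕ → E} {a L : ℝ} (ha : 0 < a) (hf : Tendsto f atTop (𝓝 L))
    (h : ∀ t, f t - f (t + 1) ≥ a * ‖x (t + 1) - x t‖ ^ 2) :
    Tendsto (fun t => ‖x (t + 1) - x t‖) atTop (𝓝 0) := by
  have hdecr : Tendsto (fun t => (f t - f (t + 1)) / a) atTop (𝓝 0) := by
    simpa using (hf.sub (hf.comp (tendsto_add_atTop_nat 1))).div_const a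
  have hsq : Tendsto (fun t => ‖x (t + 1) - x t‖ ^ 2) atTop (𝓝 0) :=
    squeeze_zero (fun _ => sq_nonneg _) (fun t => (le_div_iff₀' ha).2 (h t)) hdecr
  simpa [Real.sqrt_sq (norm_nonneg _)] using hsq.sqrt

theorem stmt_10_general {E : Type*} [NormedAddCommGroup E] [InnerProductSpace ℝ E] [CompleteSpace E]
    (Ψ : E → ℝ) (hΨ : ContDiff ℝ 1 Ψ)
    (a b : ℝ) (ha : 0 < a) (z : ℕ → E)
    (H1 : ∀ t : ℕ, Ψ (z t) - Ψ (z (t + 1)) ≥ a * ‖z (t + 1) - z t‖ ^ 2)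
    (H2 : ∀ t : ℕ, ‖gradient Ψ (z (t + 1))‖ ≤ b * ‖z (t + 1) - z t‖) :
    ∀ zstar : E,
      (∃ φ : ℕ → ℕ, StrictMono φ ∧ Tendsto (fun k => z (φ k)) atTop (nhds zstar)) →
        gradient Ψ zstar = 0 ∧ Tendsto (fun t => Ψ (z t)) atTop (nhds (Ψ zstar)) := by
  rintro zstar ⟨φ, hφ, hconv⟩
  have hanti : Antitone fun t => Ψ (z t) :=
    antitone_nat_of_succ_le fun t => sub_nonneg.1 ((mul_nonneg ha.le (sq_nonneg _)).trans (H1 t))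
  have hval : Tendsto (fun t => Ψ (z t)) atTop (𝓝 (Ψ zstar)) :=
    (tendsto_iff_tendsto_subseq_of_antitone hanti hφ.tendsto_atTop).2
      ((hΨ.continuous.tendsto zstar).comp hconv)
  have hstep := tendsto_norm_sub_succ_of_sufficient_decrease ha hval H1
  have hgrad : Tendsto (fun t => gradient Ψ (z t)) atTop (𝓝 0) :=
    (tendsto_add_atTop_iff_nat 1).1 (squeeze_zero_norm H2 (by simpa using hstep.const_mul b))
  exact ⟨tendsto_nhds_unique (((hΨ.continuous_gradient one_ne_zero).tendsto zstar).comp hconv)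
    (hgrad.comp hφ.tendsto_atTop), hval⟩

/-- Subsequence-convergence step in the proof of Theorem 1 (smooth setting): every
cluster point of the IPAD iterates is a critical point of Ψ, and Ψ(zᵗ) converges to
the value of Ψ there. -/
theorem stmt_10 {E : Type*} [NormedAddCommGroup E] [InnerProductSpace ℝ E] [CompleteSpace E]
    (Ψ : E → ℝ) (hΨ : ContDiff ℝ 1 Ψ) (hbdd : ∃ m : ℝ, ∀ z : E, m ≤ Ψ z)
    (a b : ℝ) (ha : 0 < a) (hb : 0 < b) (z : ℕ → E)
    (H1 : ∀ t : ℕ, Ψ (z t) - Ψ (z (t + 1)) ≥ a * ‖z (t + 1) - z t‖ ^ 2)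
    (H2 : ∀ t : ℕ, ‖gradient Ψ (z (t + 1))‖ ≤ b * ‖z (t + 1) - z t‖) :
    ∀ zstar : E,
      (∃ φ : ℕ → ℕ, StrictMono φ ∧ Tendsto (fun k => z (φ k)) atTop (nhds zstar)) →
        gradient Ψ zstar = 0 ∧ Tendsto (fun t => Ψ (z t)) atTop (nhds (Ψ zstar)) :=
  stmt_10_general Ψ hΨ a b ha z H1 H2
end

section
/- Let E be a real inner product space, Ψ : E → ℝ differentiable, Ψ* ∈ ℝ, μ > 0, a, b > 0, and let φ : [0, μ) → ℝ be a concave function that is differentiable on (0, μ) with φ' > 0 there. Let z⁻, z, z⁺ ∈ E, set r := Ψ(z) − Ψ* and r⁺ := Ψ(z⁺) − Ψ*, and assume: (i) 0 < r < μ and 0 ≤ r⁺; (ii) Ψ(z) − Ψ(z⁺) ≥ a‖z⁺ − z‖²; (iii) ‖∇Ψ(z)‖ ≤ b‖z − z⁻‖; (iv) the Kurdyka–Łojasiewicz inequality φ'(r)·‖∇Ψ(z)‖ ≥ 1 holds. Then 2‖z⁺ − z‖ ≤ ‖z − z⁻‖ + (b/a)·(φ(r) − φ(r⁺)). (Key one-step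 inequality in the Kurdyka–Łojasiewicz argument proving Theorem 1, in the smooth setting.) -/
/-!
Concavity of `φ` bounds `φ(r) - φ(r⁺)` below by the tangent increment `φ'(r) (r - r⁺)`, and the
sufficient decrease gives `r - r⁺ ≥ a ‖z⁺ - z‖²`. The KL inequality `φ'(r) ≥ 1 / ‖∇Ψ(z)‖` together
with the relative error bound `‖∇Ψ(z)‖ ≤ b ‖z - z⁻‖` turns this into
`‖z⁺ - z‖² ≤ (b / a) (φ(r) - φ(r⁺)) ‖z - z⁻‖`, and AM–GM finishes.
-/

lemma ConcaveOn.mul_sub_le_sub_of_hasDerivAt {S : Set ℝ} {f : ℝ → ℝ} {f' x y : ℝ}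
    (hf : ConcaveOn ℝ S f) (hx : x ∈ S) (hy : y ∈ S) (hxy : x ≤ y) (hf' : HasDerivAt f f' y) :
    f' * (y - x) ≤ f y - f x := by
  rcases hxy.eq_or_lt with rfl | hlt
  · simp
  · have hslope := hf.le_slope_of_hasDerivAt hx hy hlt hf'
    rwa [slope_def_field, le_div_iff₀ (sub_pos.2 hlt)] at hslope

/-- In the application `x = ‖z⁺ - z‖`, `y = ‖z - z⁻‖`, `g = ‖∇Ψ(z)‖`, `p = φ'(r)`, `Δ = r - r⁺`
and `D = φ(r) - φ(r⁺)`. -/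
lemma sq_le_mul_of_kl {a b x y g p Δ D : ℝ} (ha : 0 < a) (hg : 0 ≤ g)
    (hdec : a * x ^ 2 ≤ Δ) (htangent : p * Δ ≤ D) (hgrad : g ≤ b * y) (hKL : 1 ≤ p * g) :
    x ^ 2 ≤ y * (b / a * D) := by
  have hp : 0 < p := pos_of_mul_pos_left (one_pos.trans_le hKL) hg
  have hax : 0 ≤ a * x ^ 2 := by positivity
  have hD : p * (a * x ^ 2) ≤ D := (mul_le_mul_of_nonneg_left hdec hp.le).trans htangent
  have hD0 : 0 ≤ D := (by positivity : 0 ≤ p * (a * x ^ 2)).trans hD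
  have hbound : a * x ^ 2 ≤ D * (b * y) :=
    calc a * x ^ 2 ≤ a * x ^ 2 * (p * g) := le_mul_of_one_le_right hax hKL
      _ = p * (a * x ^ 2) * g := by ring
      _ ≤ D * g := mul_le_mul_of_nonneg_right hD hg
      _ ≤ D * (b * y) := mul_le_mul_of_nonneg_left hgrad hD0
  rw [div_mul_eq_mul_div, ← mul_div_assoc, le_div_iff₀ ha]
  linarith

theorem stmt_11_general {E : Type*} [NormedAddCommGroup E] [InnerProductSpace ℝ E] [CompleteSpace E]
    (Ψ : E → ℝ)
    (Ψstar μ a b : ℝ) (ha : 0 < a)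
    (φ φ' : ℝ → ℝ)
    (hconc : ConcaveOn ℝ (Set.Ico 0 μ) φ)
    (hderiv : ∀ s ∈ Set.Ioo (0 : ℝ) μ, HasDerivAt φ (φ' s) s)
    (zm z zp : E)
    (hr0 : 0 < Ψ z - Ψstar) (hrμ : Ψ z - Ψstar < μ) (hrp : 0 ≤ Ψ zp - Ψstar)
    (hdec : Ψ z - Ψ zp ≥ a * ‖zp - z‖ ^ 2)
    (hgrad : ‖gradient Ψ z‖ ≤ b * ‖z - zm‖)
    (hKL : φ' (Ψ z - Ψstar) * ‖gradient Ψ z‖ ≥ 1) :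
    2 * ‖zp - z‖ ≤ ‖z - zm‖ + (b / a) * (φ (Ψ z - Ψstar) - φ (Ψ zp - Ψstar)) := by
  set r := Ψ z - Ψstar
  set rp := Ψ zp - Ψstar
  have hdec' : a * ‖zp - z‖ ^ 2 ≤ r - rp := by linarith
  have hle : rp ≤ r := sub_nonneg.1 ((by positivity : 0 ≤ a * ‖zp - z‖ ^ 2).trans hdec')
  have htangent : φ' r * (r - rp) ≤ φ r - φ rp :=
    hconc.mul_sub_le_sub_of_hasDerivAt ⟨hrp, hle.trans_lt hrμ⟩ ⟨hr0.le, hrμ⟩ hle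
      (hderiv r ⟨hr0, hrμ⟩)
  have hY : 0 < ‖z - zm‖ := by
    by_contra! hY
    rw [norm_le_zero_iff.1 hY, norm_zero, mul_zero, norm_le_zero_iff] at hgrad
    rw [hgrad, norm_zero, mul_zero] at hKL
    exact absurd hKL (by norm_num)
  have hsq := sq_le_mul_of_kl ha (norm_nonneg _) hdec' htangent hgrad hKL
  exact two_mul_le_add_of_sq_le_mul hY.le
    (nonneg_of_mul_nonneg_right ((sq_nonneg _).trans hsq) hY) hsq

/-- Key one-step inequality in the Kurdyka–Łojasiewicz argument proving Theorem 1
(smooth setting). -/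
theorem stmt_11 {E : Type*} [NormedAddCommGroup E] [InnerProductSpace ℝ E] [CompleteSpace E]
    (Ψ : E → ℝ) (hΨ : Differentiable ℝ Ψ)
    (Ψstar μ a b : ℝ) (hμ : 0 < μ) (ha : 0 < a) (hb : 0 < b)
    (φ φ' : ℝ → ℝ)
    (hconc : ConcaveOn ℝ (Set.Ico 0 μ) φ)
    (hderiv : ∀ s ∈ Set.Ioo (0 : ℝ) μ, HasDerivAt φ (φ' s) s)
    (hφ'pos : ∀ s ∈ Set.Ioo (0 : ℝ) μ, 0 < φ' s)
    (zm z zp : E)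
    (hr0 : 0 < Ψ z - Ψstar) (hrμ : Ψ z - Ψstar < μ) (hrp : 0 ≤ Ψ zp - Ψstar)
    (hdec : Ψ z - Ψ zp ≥ a * ‖zp - z‖ ^ 2)
    (hgrad : ‖gradient Ψ z‖ ≤ b * ‖z - zm‖)
    (hKL : φ' (Ψ z - Ψstar) * ‖gradient Ψ z‖ ≥ 1) :
    2 * ‖zp - z‖ ≤ ‖z - zm‖ + (b / a) * (φ (Ψ z - Ψstar) - φ (Ψ zp - Ψstar)) :=
  stmt_11_general Ψ Ψstar μ a b ha φ φ' hconc hderiv zm z zp hr0 hrμ hrp hdec hgrad hKL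
end

section
/- Let E be a real inner product space, Ψ : E → ℝ differentiable, Ψ* ∈ ℝ, and (zᵗ)_{t∈ℕ} ⊂ E with Ψ(zᵗ) ≥ Ψ* for all t. Let a, b, δ > 0 and assume for every t: (H1) Ψ(zᵗ) − Ψ(z^{t+1}) ≥ a‖z^{t+1} − zᵗ‖², (H2) ‖∇Ψ(z^{t+1})‖ ≤ b‖z^{t+1} − zᵗ‖, and ‖∇Ψ(z^{t+1})‖ ≥ δ whenever Ψ(z^{t+1}) > Ψ*. Then the iteration terminates in finitely many steps: there exists T ∈ ℕ such that for all t ≥ T, Ψ(zᵗ) = Ψ* and z^{t+1} = zᵗ. (The θ = 1 case of the convergence-rate claim: with desingularizing function φ(s) = (C/θ)s^θ and θ = 1, IPAD converges in a finite number of steps.) -/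
/-! Every step that ends strictly above `Ψstar` has a gradient of norm at least `δ`, hence by
(H2) a length at least `δ / b`, hence by (H1) it lowers `Ψ` by at least `a (δ / b) ^ 2`. Since
`Ψ (z t)` is nonincreasing and bounded below by `Ψstar`, only finitely many such steps occur, so
`Ψ (z t)` reaches `Ψstar` and stays there; from then on (H1) forces the steps to vanish. -/

lemma exists_eq_of_forall_le_sub {f : ℕ → ℝ} {m ε : ℝ} (hm : ∀ t, m ≤ f t) (hε : 0 < ε)
    (hstep : ∀ t, m < f (t + 1) → ε ≤ f t - f (t + 1)) : ∃ T, f T = m := by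
  by_contra! hne
  have hgt : ∀ t, m < f t := fun t => (hm t).lt_of_ne (hne t).symm
  have hdrop : ∀ n : ℕ, n * ε ≤ f 0 - f n := by
    intro n
    induction n with
    | zero => simp
    | succ n ih =>
      push_cast
      linarith [hstep n (hgt (n + 1))]
  obtain ⟨n, hn⟩ := exists_nat_gt ((f 0 - m) / ε)
  rw [div_lt_iff₀ hε] at hn
  linarith [hdrop n, hm n]

lemma eventually_eq_of_forall_le_sub {f : ℕ → ℝ} {m ε : ℝ} (hf : Antitone f)
    (hm : ∀ t, m ≤ f t) (hε : 0 < ε) (hstep : ∀ t, m < f (t + 1) → ε ≤ f t - f (t + 1)) :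
    ∃ T, ∀ t ≥ T, f t = m := by
  obtain ⟨T, hT⟩ := exists_eq_of_forall_le_sub hm hε hstep
  exact ⟨T, fun t ht => le_antisymm (hT ▸ hf ht) (hm t)⟩

lemma sq_div_le_sq_of_le_of_le_mul {δ g b r : ℝ} (hδ : 0 ≤ δ) (hb : 0 < b) (hδg : δ ≤ g)
    (hgr : g ≤ b * r) : (δ / b) ^ 2 ≤ r ^ 2 := by
  have hr : δ / b ≤ r := by
    rw [div_le_iff₀ hb]
    linarith
  exact pow_le_pow_left₀ (by positivity) hr 2

lemma eq_of_mul_norm_sub_sq_nonpos {F : Type*} [NormedAddCommGroup F] {a : ℝ} {x y : F}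
    (ha : 0 < a) (h : a * ‖x - y‖ ^ 2 ≤ 0) : x = y := by
  have hsq : ‖x - y‖ ^ 2 = 0 :=
    le_antisymm ((mul_nonpos_iff_pos_imp_nonpos.mp h).1 ha) (sq_nonneg _)
  exact sub_eq_zero.mp (norm_eq_zero.mp (pow_eq_zero_iff two_ne_zero |>.mp hsq))

theorem stmt_14_general {E : Type*} [NormedAddCommGroup E] [InnerProductSpace ℝ E] [CompleteSpace E]
    (Ψ : E → ℝ)
    (Ψstar : ℝ) (z : ℕ → E) (hge : ∀ t : ℕ, Ψ (z t) ≥ Ψstar)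
    (a b δ : ℝ) (ha : 0 < a) (hb : 0 < b) (hδ : 0 < δ)
    (H1 : ∀ t : ℕ, Ψ (z t) - Ψ (z (t + 1)) ≥ a * ‖z (t + 1) - z t‖ ^ 2)
    (H2 : ∀ t : ℕ, ‖gradient Ψ (z (t + 1))‖ ≤ b * ‖z (t + 1) - z t‖)
    (hlow : ∀ t : ℕ, Ψ (z (t + 1)) > Ψstar → ‖gradient Ψ (z (t + 1))‖ ≥ δ) :
    ∃ T : ℕ, ∀ t ≥ T, Ψ (z t) = Ψstar ∧ z (t + 1) = z t := by
  have hanti : Antitone (Ψ ∘ z) :=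
    antitone_nat_of_succ_le fun t => by
      show Ψ (z (t + 1)) ≤ Ψ (z t)
      nlinarith [H1 t, sq_nonneg ‖z (t + 1) - z t‖]
  have hstep : ∀ t, Ψstar < Ψ (z (t + 1)) → a * (δ / b) ^ 2 ≤ Ψ (z t) - Ψ (z (t + 1)) :=
    fun t ht => (mul_le_mul_of_nonneg_left
      (sq_div_le_sq_of_le_of_le_mul hδ.le hb (hlow t ht) (H2 t)) ha.le).trans (H1 t)
  obtain ⟨T, hT⟩ := eventually_eq_of_forall_le_sub hanti hge (by positivity) hstep
  refine ⟨T, fun t ht => ⟨hT t ht, eq_of_mul_norm_sub_sq_nonpos ha ?_⟩⟩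
  have hflat : Ψ (z t) = Ψ (z (t + 1)) := (hT t ht).trans (hT (t + 1) (by omega)).symm
  linarith [H1 t]

/-- The θ = 1 case of the convergence-rate claim: with a uniform lower bound on the
gradient above the limiting value, IPAD terminates in a finite number of steps. -/
theorem stmt_14 {E : Type*} [NormedAddCommGroup E] [InnerProductSpace ℝ E] [CompleteSpace E]
    (Ψ : E → ℝ) (hΨ : Differentiable ℝ Ψ)
    (Ψstar : ℝ) (z : ℕ → E) (hge : ∀ t : ℕ, Ψ (z t) ≥ Ψstar)
    (a b δ : ℝ) (ha : 0 < a) (hb : 0 < b) (hδ : 0 < δ)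
    (H1 : ∀ t : ℕ, Ψ (z t) - Ψ (z (t + 1)) ≥ a * ‖z (t + 1) - z t‖ ^ 2)
    (H2 : ∀ t : ℕ, ‖gradient Ψ (z (t + 1))‖ ≤ b * ‖z (t + 1) - z t‖)
    (hlow : ∀ t : ℕ, Ψ (z (t + 1)) > Ψstar → ‖gradient Ψ (z (t + 1))‖ ≥ δ) :
    ∃ T : ℕ, ∀ t ≥ T, Ψ (z t) = Ψstar ∧ z (t + 1) = z t :=
  stmt_14_general Ψ Ψstar z hge a b δ ha hb hδ H1 H2 hlow
end

section
/- Let E be a real inner product space, Ψ : E → ℝ differentiable, Ψ* ∈ ℝ, and (zᵗ)_{t∈ℕ} ⊂ E with Ψ(zᵗ) ≥ Ψ* for all t and Ψ(z⁰) − Ψ* ≤ 1. Let a, b, C > 0, θ ∈ (1/2, 1), and assume for every t: (H1) Ψ(zᵗ) − Ψ(z^{t+1}) ≥ a‖z^{t+1} − zᵗ‖², (H2) ‖∇Ψ(z^{t+1})‖ ≤ b‖z^{t+1} − zᵗ‖, and the Łojasiewicz inequality ‖∇Ψ(z^{t+1})‖ ≥ (1/C)·(Ψ(z^{t+1}) −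 Ψ*)^{1−θ}. Then the objective values converge at a linear (geometric) rate: Ψ(zᵗ) − Ψ* ≤ (1 + a/(b²C²))^{−t}·(Ψ(z⁰) − Ψ*) for all t. (The θ ∈ (1/2, 1) case of the convergence-rate claim: with desingularizing function φ(s) = (C/θ)s^θ, IPAD converges with a linear rate.) -/
/-!
Sufficient decrease and relative error give `a r_{t+1}^{2(1-θ)} ≤ b²C² (r_t - r_{t+1})` for
`r_t = Ψ(zᵗ) - Ψ*` via the Łojasiewicz inequality. Since `r_t ≤ r_0 ≤ 1` and `2(1-θ) ≤ 1`, the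
power can be dropped, `r_{t+1} ≤ r_{t+1}^{2(1-θ)}`, which leaves the contraction
`(1 + a/(b²C²)) r_{t+1} ≤ r_t`.
-/

theorem le_rpow_neg_mul_of_mul_succ_le {r : ℕ → ℝ} {q : ℝ} (hq : 0 < q)
    (h : ∀ t, q * r (t + 1) ≤ r t) (t : ℕ) : r t ≤ q ^ (-(t : ℝ)) * r 0 := by
  rw [Real.rpow_neg hq.le, Real.rpow_natCast]
  induction t with
  | zero => simp
  | succ n ih =>
    calc r (n + 1) ≤ r n / q := by rw [le_div_iff₀ hq, mul_comm]; exact h n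
      _ ≤ (q ^ n)⁻¹ * r 0 / q := by gcongr
      _ = (q ^ (n + 1))⁻¹ * r 0 := by rw [pow_succ, mul_inv]; ring

theorem one_add_div_mul_le_of_loj {a b C θ r₀ r₁ d g : ℝ} (ha : 0 ≤ a) (hb : 0 < b)
    (hC : 0 < C) (hθ : 1 / 2 ≤ θ) (hr₁ : 0 ≤ r₁) (hr₁_le : r₁ ≤ 1)
    (hdecr : a * d ^ 2 ≤ r₀ - r₁) (hgrad : g ≤ b * d) (hloj : 1 / C * r₁ ^ (1 - θ) ≤ g) :
    (1 + a / (b ^ 2 * C ^ 2)) * r₁ ≤ r₀ := by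
  have hpow : r₁ ≤ (r₁ ^ (1 - θ)) ^ 2 := by
    rw [← Real.rpow_mul_natCast hr₁]
    exact Real.self_le_rpow_of_le_one hr₁ hr₁_le (by push_cast; linarith)
  have hroot : r₁ ^ (1 - θ) ≤ C * b * d := by
    rw [one_div_mul_eq_div, div_le_iff₀ hC] at hloj
    nlinarith
  have hsq : r₁ ≤ b ^ 2 * C ^ 2 * d ^ 2 :=
    hpow.trans ((pow_le_pow_left₀ (by positivity) hroot 2).trans_eq (by ring))
  have hbC : 0 < b ^ 2 * C ^ 2 := by positivity
  calc (1 + a / (b ^ 2 * C ^ 2)) * r₁ = r₁ + a * r₁ / (b ^ 2 * C ^ 2) := by ring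
    _ ≤ r₁ + a * (b ^ 2 * C ^ 2 * d ^ 2) / (b ^ 2 * C ^ 2) := by gcongr
    _ = r₁ + a * d ^ 2 := by field_simp
    _ ≤ r₀ := by linarith

theorem stmt_15_general {E : Type*} [NormedAddCommGroup E] [InnerProductSpace ℝ E] [CompleteSpace E]
    (Ψ : E → ℝ)
    (Ψstar : ℝ) (z : ℕ → E) (hge : ∀ t : ℕ, Ψ (z t) ≥ Ψstar)
    (h0 : Ψ (z 0) - Ψstar ≤ 1)
    (a b C θ : ℝ) (ha : 0 < a) (hb : 0 < b) (hC : 0 < C)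
    (hθ₁ : 1 / 2 < θ)
    (H1 : ∀ t : ℕ, Ψ (z t) - Ψ (z (t + 1)) ≥ a * ‖z (t + 1) - z t‖ ^ 2)
    (H2 : ∀ t : ℕ, ‖gradient Ψ (z (t + 1))‖ ≤ b * ‖z (t + 1) - z t‖)
    (hLoj : ∀ t : ℕ,
      ‖gradient Ψ (z (t + 1))‖ ≥ (1 / C) * (Ψ (z (t + 1)) - Ψstar) ^ (1 - θ)) :
    ∀ t : ℕ,
      Ψ (z t) - Ψstar ≤ (1 + a / (b ^ 2 * C ^ 2)) ^ (-(t : ℝ)) * (Ψ (z 0) - Ψstar) := by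
  set r : ℕ → ℝ := fun t => Ψ (z t) - Ψstar
  have hanti : Antitone r := antitone_nat_of_succ_le fun t => by
    have : 0 ≤ a * ‖z (t + 1) - z t‖ ^ 2 := by positivity
    linarith [H1 t]
  have hstep (t : ℕ) : (1 + a / (b ^ 2 * C ^ 2)) * r (t + 1) ≤ r t :=
    one_add_div_mul_le_of_loj ha.le hb hC hθ₁.le (sub_nonneg.2 (hge _))
      ((hanti (Nat.zero_le _)).trans h0) (by linarith [H1 t]) (H2 t) (hLoj t)
  exact le_rpow_neg_mul_of_mul_succ_le (by positivity) hstep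

/-- The θ ∈ (1/2, 1) case of the convergence-rate claim: IPAD converges with a linear
(geometric) rate in objective values. -/
theorem stmt_15 {E : Type*} [NormedAddCommGroup E] [InnerProductSpace ℝ E] [CompleteSpace E]
    (Ψ : E → ℝ) (hΨ : Differentiable ℝ Ψ)
    (Ψstar : ℝ) (z : ℕ → E) (hge : ∀ t : ℕ, Ψ (z t) ≥ Ψstar)
    (h0 : Ψ (z 0) - Ψstar ≤ 1)
    (a b C θ : ℝ) (ha : 0 < a) (hb : 0 < b) (hC : 0 < C)
    (hθ₁ : 1 / 2 < θ) (hθ₂ : θ < 1)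
    (H1 : ∀ t : ℕ, Ψ (z t) - Ψ (z (t + 1)) ≥ a * ‖z (t + 1) - z t‖ ^ 2)
    (H2 : ∀ t : ℕ, ‖gradient Ψ (z (t + 1))‖ ≤ b * ‖z (t + 1) - z t‖)
    (hLoj : ∀ t : ℕ,
      ‖gradient Ψ (z (t + 1))‖ ≥ (1 / C) * (Ψ (z (t + 1)) - Ψstar) ^ (1 - θ)) :
    ∀ t : ℕ,
      Ψ (z t) - Ψstar ≤ (1 + a / (b ^ 2 * C ^ 2)) ^ (-(t : ℝ)) * (Ψ (z 0) - Ψstar) :=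
  stmt_15_general Ψ Ψstar z hge h0 a b C θ ha hb hC hθ₁ H1 H2 hLoj
end
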